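/- arXiv:1610.09127 — 6 statements merged into one kernel-verified Lean document; each statement's English description precedes it below -/
import Mathlib

section
/- The zero vector 0 ∈ ℝ^p is a global minimizer of the weighted Lasso objective β ↦ L(β,λ) if and only if λ ≥ λ_max, where λ_max = max_{1≤j≤p} |Σ_{i=1}^t w_i y_i X_{i,j}| = max_j |(XᵀWy)_j|. -/
/-!
Write `S = XᵀWX` and `c = XᵀWy`. Expanding the square gives
`L(β,λ) - L(0,λ) = ½ βᵀSβ - βᵀc + λ‖β‖₁`, where `S` is positive semidefinite.
If every `|c_j| ≤ λ`, then `βᵀc ≤ λ‖β‖₁` and the difference is nonnegative. Conversely, testing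
`β = ±ε e_j` gives `ε|c_j| ≤ λε + S_jj ε²/2`; divide by `ε` and let `ε → 0⁺`.
-/

open Matrix BigOperators

/-- The weighted Lasso objective
`L(β,λ) = (1/2)·Σ_i w_i (y_i − X_iᵀβ)² + λ·Σ_j |β_j|`. -/
noncomputable def lassoObj {p t : ℕ} (X : Matrix (Fin t) (Fin p) ℝ)
    (y w : Fin t → ℝ) (lam : ℝ) (β : Fin p → ℝ) : ℝ :=
  (1 / 2) * ∑ i, w i * (y i - X i ⬝ᵥ β) ^ 2 + lam * ∑ j, |β j|

open Filter Topology

theorem abs_le_of_forall_quadratic_nonneg {a c lam : ℝ}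
    (h : ∀ r : ℝ, 0 ≤ a * r ^ 2 - r * c + lam * |r|) : |c| ≤ lam := by
  have hbound : ∀ ε > 0, |c| ≤ lam + ε * a := by
    intro ε hε
    have hpos := h ε
    have hneg := h (-ε)
    rw [abs_of_pos hε] at hpos
    rw [abs_neg, abs_of_pos hε] at hneg
    rw [abs_le]
    constructor <;> nlinarith
  have hlim : Tendsto (fun ε => lam + ε * a) (𝓝[>] 0) (𝓝 lam) := by
    have : Continuous fun ε : ℝ => lam + ε * a := by fun_prop
    simpa using (this.tendsto 0).mono_left nhdsWithin_le_nhds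
  exact ge_of_tendsto hlim (eventually_nhdsWithin_of_forall hbound)

section l1PenalizedQuadratic

variable {n : Type*} [Fintype n]

/-- `L(β,λ) - L(0,λ)` for the Lasso with Gram matrix `S` and correlation vector `c`. -/
noncomputable def l1PenalizedQuadratic (S : Matrix n n ℝ) (c : n → ℝ) (lam : ℝ) (β : n → ℝ) : ℝ :=
  1 / 2 * (β ⬝ᵥ S *ᵥ β) - β ⬝ᵥ c + lam * ∑ j, |β j|

theorem l1PenalizedQuadratic_single [DecidableEq n] (S : Matrix n n ℝ) (c : n → ℝ) (lam : ℝ)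
    (j : n) (r : ℝ) :
    l1PenalizedQuadratic S c lam (Pi.single j r) = S j j / 2 * r ^ 2 - r * c j + lam * |r| := by
  have habs : ∑ k, |Pi.single j r k| = |r| := by
    simp_rw [Pi.apply_single (fun _ => abs) (fun _ => abs_zero), Finset.sum_pi_single',
      Finset.mem_univ, if_true]
  rw [l1PenalizedQuadratic, single_dotProduct, single_dotProduct, mulVec_single, habs]
  simp only [Pi.smul_apply, col_apply, MulOpposite.smul_eq_mul_unop, MulOpposite.unop_op]
  ring

theorem abs_le_of_forall_l1PenalizedQuadratic_nonneg [DecidableEq n] {S : Matrix n n ℝ}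
    {c : n → ℝ} {lam : ℝ} (h : ∀ β, 0 ≤ l1PenalizedQuadratic S c lam β) (j : n) :
    |c j| ≤ lam :=
  abs_le_of_forall_quadratic_nonneg fun r => l1PenalizedQuadratic_single S c lam j r ▸ h _

theorem l1PenalizedQuadratic_nonneg {S : Matrix n n ℝ} (hS : S.PosSemidef)
    {c : n → ℝ} {lam : ℝ} (hc : ∀ j, |c j| ≤ lam) (β : n → ℝ) :
    0 ≤ l1PenalizedQuadratic S c lam β := by
  have hquad : 0 ≤ β ⬝ᵥ S *ᵥ β := hS.dotProduct_mulVec_nonneg β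
  have hlin : β ⬝ᵥ c ≤ lam * ∑ j, |β j| := by
    rw [Finset.mul_sum]
    refine Finset.sum_le_sum fun j _ => ?_
    calc β j * c j ≤ |β j| * |c j| := abs_mul (β j) (c j) ▸ le_abs_self _
      _ ≤ lam * |β j| := by rw [mul_comm]; exact mul_le_mul_of_nonneg_right (hc j) (abs_nonneg _)
  unfold l1PenalizedQuadratic
  linarith

theorem forall_l1PenalizedQuadratic_nonneg_iff [DecidableEq n] {S : Matrix n n ℝ}
    (hS : S.PosSemidef) (c : n → ℝ) (lam : ℝ) :
    (∀ β, 0 ≤ l1PenalizedQuadratic S c lam β) ↔ ∀ j, |c j| ≤ lam :=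
  ⟨abs_le_of_forall_l1PenalizedQuadratic_nonneg, l1PenalizedQuadratic_nonneg hS⟩

end l1PenalizedQuadratic

theorem lassoObj_sub_lassoObj_zero {p t : ℕ} (X : Matrix (Fin t) (Fin p) ℝ) (y w : Fin t → ℝ)
    (lam : ℝ) (β : Fin p → ℝ) :
    lassoObj X y w lam β - lassoObj X y w lam 0 =
      l1PenalizedQuadratic (Xᵀ * diagonal w * X) ((Xᵀ * diagonal w) *ᵥ y) lam β := by
  set u := X *ᵥ β
  have hlin : β ⬝ᵥ (Xᵀ * diagonal w) *ᵥ y = u ⬝ᵥ diagonal w *ᵥ y := by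
    rw [← mulVec_mulVec, dotProduct_mulVec, vecMul_transpose]
  have hquad : β ⬝ᵥ (Xᵀ * diagonal w * X) *ᵥ β = u ⬝ᵥ diagonal w *ᵥ u := by
    rw [← mulVec_mulVec, ← mulVec_mulVec, dotProduct_mulVec, vecMul_transpose]
  have hsq : ∑ i, w i * (y i - u i) ^ 2 = ∑ i, w i * (y i - 0) ^ 2
      + u ⬝ᵥ diagonal w *ᵥ u - 2 * (u ⬝ᵥ diagonal w *ᵥ y) := by
    simp only [dotProduct, mulVec_diagonal, Finset.mul_sum, ← Finset.sum_add_distrib,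
      ← Finset.sum_sub_distrib]
    exact Finset.sum_congr rfl fun i _ => by ring
  simp only [lassoObj, l1PenalizedQuadratic, hlin, hquad, dotProduct_zero, Pi.zero_apply,
    abs_zero, Finset.sum_const_zero, mul_zero, add_zero]
  change 1 / 2 * ∑ i, w i * (y i - u i) ^ 2 + _ - _ = _
  rw [hsq]
  ring

theorem lasso_zero_minimizer_iff_general
    {p t : ℕ} (hp : 0 < p) (X : Matrix (Fin t) (Fin p) ℝ) (y w : Fin t → ℝ)
    (hw : ∀ i, 0 < w i) (lam : ℝ) :
    (∀ β : Fin p → ℝ, lassoObj X y w lam 0 ≤ lassoObj X y w lam β) ↔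
      lam ≥ Finset.univ.sup' (Finset.univ_nonempty_iff.mpr ⟨⟨0, hp⟩⟩)
        (fun j : Fin p => |((Xᵀ * Matrix.diagonal w).mulVec y) j|) := by
  have hS : (Xᵀ * diagonal w * X).PosSemidef := by
    simpa only [conjTranspose_eq_transpose_of_trivial] using
      (posSemidef_diagonal_iff.mpr fun i => (hw i).le).conjTranspose_mul_mul_same X
  simp only [← sub_nonneg (b := lassoObj X y w lam 0), lassoObj_sub_lassoObj_zero, ge_iff_le,
    Finset.sup'_le_iff, Finset.mem_univ, true_implies]
  exact forall_l1PenalizedQuadratic_nonneg_iff hS _ lam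

/-- `0` is a global minimizer of the weighted Lasso objective `L(·,λ)` iff
`λ ≥ λ_max = max_j |(XᵀWy)_j| = max_j |Σ_i w_i y_i X_{i,j}|`. -/
theorem lasso_zero_minimizer_iff
    {p t : ℕ} (hp : 0 < p) (X : Matrix (Fin t) (Fin p) ℝ) (y w : Fin t → ℝ)
    (hw : ∀ i, 0 < w i) (lam : ℝ) (hlam : 0 ≤ lam) :
    (∀ β : Fin p → ℝ, lassoObj X y w lam 0 ≤ lassoObj X y w lam β) ↔
      lam ≥ Finset.univ.sup' (Finset.univ_nonempty_iff.mpr ⟨⟨0, hp⟩⟩)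
        (fun j : Fin p => |((Xᵀ * Matrix.diagonal w).mulVec y) j|) :=
  lasso_zero_minimizer_iff_general hp X y w hw lam
end

section
/- Suppose S = XᵀWX is positive definite, λ ≥ 0, and β̂ ∈ ℝ^p is a global minimizer of β ↦ L(β,λ) such that β̂_j ≠ 0 for every j, with sign vector s ∈ {−1,1}^p given by s_j = sign(β̂_j). Then β̂ = S⁻¹(XᵀWy − λ·s). -/
open Matrix BigOperators

/-- If `S = XᵀWX` is positive definite and `β̂` is a global minimizer of
`L(·,λ)` with all coordinates nonzero and sign vector `s`, then
`β̂ = S⁻¹ (XᵀWy − λ·s)`. -/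
theorem lasso_closed_form_on_full_support
    {p t : ℕ} (X : Matrix (Fin t) (Fin p) ℝ) (y w : Fin t → ℝ)
    (hw : ∀ i, 0 < w i)
    (hS : (Xᵀ * Matrix.diagonal w * X).PosDef)
    (lam : ℝ) (hlam : 0 ≤ lam) (βhat : Fin p → ℝ)
    (hmin : ∀ β : Fin p → ℝ, lassoObj X y w lam βhat ≤ lassoObj X y w lam β)
    (hne : ∀ j, βhat j ≠ 0)
    (s : Fin p → ℝ) (hs₁ : ∀ j, s j = -1 ∨ s j = 1)
    (hs₂ : ∀ j, s j = Real.sign (βhat j)) :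
    βhat = (Xᵀ * Matrix.diagonal w * X)⁻¹.mulVec
      ((Xᵀ * Matrix.diagonal w).mulVec y - lam • s) := by
  have key : ∀ j, ∑ i, w i * X i j * (y i - X i ⬝ᵥ βhat) = lam * s j := by
    intro j
    set g : ℝ → ℝ := fun ε =>
      (1/2) * ∑ i, w i * (y i - (X i ⬝ᵥ βhat + ε * X i j)) ^ 2
        + lam * ∑ k, |βhat k + ε * (Pi.single j 1 : Fin p → ℝ) k| with hgdef
    have hg : ∀ ε, g ε = lassoObj X y w lam (βhat + ε • (Pi.single j 1 : Fin p → ℝ)) := by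
      intro ε
      simp only [hgdef, lassoObj, dotProduct_add, dotProduct_smul, smul_eq_mul,
        dotProduct_single, mul_one, Pi.add_apply, Pi.smul_apply]
    have hmin0 : IsLocalMin g 0 := by
      refine Filter.Eventually.of_forall (fun ε => ?_)
      have h0 : g 0 = lassoObj X y w lam βhat := by
        rw [hg]; simp
      rw [h0, hg]
      exact hmin _
    have h1 : HasDerivAt (fun ε : ℝ => ∑ i, w i * (y i - (X i ⬝ᵥ βhat + ε * X i j)) ^ 2)
        (∑ i, w i * (2 * (y i - X i ⬝ᵥ βhat) * (-(X i j)))) 0 := by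
      apply HasDerivAt.fun_sum
      intro i _
      have hu : HasDerivAt (fun ε : ℝ => y i - (X i ⬝ᵥ βhat + ε * X i j)) (-(X i j)) 0 := by
        simpa using (((hasDerivAt_id (0:ℝ)).mul_const (X i j)).const_add
          (X i ⬝ᵥ βhat)).const_sub (y i)
      have := (hu.pow 2).const_mul (w i)
      convert this using 1
      · rfl
      · rfl
      push_cast
      ring
    have h2 : HasDerivAt (fun ε : ℝ => ∑ k, |βhat k + ε * (Pi.single j 1 : Fin p → ℝ) k|)
        ((SignType.sign (βhat j) : ℝ)) 0 := by
      have : ((SignType.sign (βhat j) : ℝ))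
          = ∑ k, (if k = j then (SignType.sign (βhat j) : ℝ) else 0) := by
        rw [Finset.sum_ite_eq' Finset.univ j, if_pos (Finset.mem_univ j)]
      rw [this]
      apply HasDerivAt.fun_sum
      intro k _
      by_cases hk : k = j
      · subst hk
        simp only [Pi.single_eq_same, mul_one, if_pos]
        have hlin : HasDerivAt (fun ε : ℝ => βhat k + ε) 1 0 :=
          (hasDerivAt_id (0:ℝ)).const_add (βhat k)
        have habs : HasDerivAt (fun x : ℝ => |x|) ((SignType.sign (βhat k) : ℝ))
            ((fun ε : ℝ => βhat k + ε) 0) := by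
          simpa using hasDerivAt_abs (hne k)
        simpa [Function.comp_def] using habs.comp 0 hlin
      · simp only [Pi.single_eq_of_ne hk, mul_zero, add_zero, if_neg hk]
        exact hasDerivAt_const _ _
    have hderiv : HasDerivAt g
        ((1/2) * ∑ i, w i * (2 * (y i - X i ⬝ᵥ βhat) * (-(X i j)))
          + lam * (SignType.sign (βhat j) : ℝ)) 0 :=
      (h1.const_mul (1/2)).add (h2.const_mul lam)
    have h0 := hmin0.hasDerivAt_eq_zero hderiv
    have hsgn : (SignType.sign (βhat j) : ℝ) = s j := by
      rcases lt_trichotomy (βhat j) 0 with h | h | h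
      · rw [hs₂ j, Real.sign_of_neg h]; simp [h]
      · exact absurd h (hne j)
      · rw [hs₂ j, Real.sign_of_pos h]; simp [h]
    rw [hsgn] at h0
    have hsum : ∑ i, w i * (2 * (y i - X i ⬝ᵥ βhat) * (-(X i j)))
        = -2 * ∑ i, w i * X i j * (y i - X i ⬝ᵥ βhat) := by
      rw [Finset.mul_sum]; congr 1; ext i; ring
    rw [hsum] at h0
    linarith
  have hSb : (Xᵀ * Matrix.diagonal w * X).mulVec βhat
      = (Xᵀ * Matrix.diagonal w).mulVec y - lam • s := by
    funext j
    have hk := key j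
    have expand : ∑ i, w i * X i j * (y i - X i ⬝ᵥ βhat)
        = ∑ i, w i * X i j * y i - ∑ i, ∑ k, w i * X i j * (X i k * βhat k) := by
      rw [← Finset.sum_sub_distrib]
      refine Finset.sum_congr rfl fun i _ => ?_
      rw [dotProduct, mul_sub, Finset.mul_sum]
    simp only [Matrix.mulVec, dotProduct, Matrix.mul_apply, Matrix.mul_diagonal,
      Matrix.transpose_apply, Pi.sub_apply, Pi.smul_apply, smul_eq_mul,
      Matrix.diagonal_apply, mul_ite, mul_zero, Finset.sum_ite_eq',
      Finset.mem_univ, if_true]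
    have hA : ∑ k, (∑ i, X i j * w i * X i k) * βhat k
        = ∑ i, ∑ k, w i * X i j * (X i k * βhat k) := by
      rw [Finset.sum_comm]
      refine Finset.sum_congr rfl fun i _ => ?_
      rw [Finset.sum_mul]
      exact Finset.sum_congr rfl fun k _ => by ring
    have hB : ∑ i, X i j * w i * y i = ∑ i, w i * X i j * y i :=
      Finset.sum_congr rfl fun i _ => by ring
    rw [hA, hB]
    linarith [hk, expand]
  have hdet : IsUnit (Xᵀ * Matrix.diagonal w * X).det := hS.det_pos.ne'.isUnit
  calc βhat = (1 : Matrix (Fin p) (Fin p) ℝ).mulVec βhat := by simp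
    _ = ((Xᵀ * Matrix.diagonal w * X)⁻¹ * (Xᵀ * Matrix.diagonal w * X)).mulVec βhat := by
        rw [Matrix.nonsing_inv_mul _ hdet]
    _ = (Xᵀ * Matrix.diagonal w * X)⁻¹.mulVec ((Xᵀ * Matrix.diagonal w * X).mulVec βhat) := by
        rw [Matrix.mulVec_mulVec]
    _ = _ := by rw [hSb]
end

section
/- (Proposition 1.) Suppose S = XᵀWX is positive definite. Let I ⊆ (0,∞) be an open interval and β̂ : I → ℝ^p a map such that for each λ ∈ I, β̂(λ) is a global minimizer of β ↦ L(β,λ), and suppose there is a fixed sign vector s ∈ {−1,1}^p with sign(β̂(λ)_j) = s_j for all λ ∈ I and all j (in particular every coordinate of β̂(λ) is nonzero on I). Then β̂ is differentiable on I and its derivative satisfies dβ̂/dλ = −S⁻¹ s, a constant vector; in particular the derivative of the Lasso solution with respect to λ is piecewise constant and available in closed form. -/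
open Matrix BigOperators

lemma abs_deriv_aux {c : ℝ} (hc : c ≠ 0) :
    HasDerivAt (fun u : ℝ => |c + u|) (Real.sign c) 0 := by
  have h1 : HasDerivAt (fun u : ℝ => c + u) 1 0 := by
    simpa using (hasDerivAt_const 0 c).fun_add (hasDerivAt_id 0)
  have h2 : HasDerivAt (fun u : ℝ => |c + u|) ((SignType.sign (c + 0) : ℝ) * 1) 0 := by
    exact (hasDerivAt_abs (by simpa using hc)).comp 0 h1
  simp only [add_zero, mul_one] at h2
  convert h2 using 1
  rcases lt_trichotomy c 0 with h | h | h
  · rw [Real.sign_of_neg h, sign_neg h]; simp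
  · exact absurd h hc
  · rw [Real.sign_of_pos h, sign_pos h]; simp

/-- Proposition 1: on an open interval `I = (a,b) ⊆ (0,∞)` where the Lasso
solution has a constant sign vector `s ∈ {−1,1}^p`, the solution path is
differentiable with constant derivative `dβ̂/dλ = −S⁻¹ s`. -/
theorem lasso_path_derivative
    {p t : ℕ} (X : Matrix (Fin t) (Fin p) ℝ) (y w : Fin t → ℝ)
    (hw : ∀ i, 0 < w i)
    (hS : (Xᵀ * Matrix.diagonal w * X).PosDef)
    (a b : ℝ) (ha : 0 ≤ a)
    (βhat : ℝ → Fin p → ℝ)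
    (hmin : ∀ lam ∈ Set.Ioo a b,
      ∀ β : Fin p → ℝ, lassoObj X y w lam (βhat lam) ≤ lassoObj X y w lam β)
    (s : Fin p → ℝ) (hs₁ : ∀ j, s j = -1 ∨ s j = 1)
    (hs₂ : ∀ lam ∈ Set.Ioo a b, ∀ j, Real.sign (βhat lam j) = s j) :
    ∀ lam ∈ Set.Ioo a b,
      HasDerivAt βhat (-(Xᵀ * Matrix.diagonal w * X)⁻¹.mulVec s) lam := by
  classical
  set S : Matrix (Fin p) (Fin p) ℝ := Xᵀ * Matrix.diagonal w * X with hSdef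
  have hdet : IsUnit S.det := isUnit_iff_ne_zero.mpr (ne_of_gt hS.det_pos)
  -- KKT conditions
  have kkt : ∀ lam ∈ Set.Ioo a b, ∀ j,
      ∑ i, w i * (y i - X i ⬝ᵥ βhat lam) * X i j = lam * s j := by
    intro lam hlam j
    set β := βhat lam with hβ
    have hβj : β j ≠ 0 := by
      intro h
      have h2 := hs₂ lam hlam j
      rw [← hβ, h, Real.sign_zero] at h2
      rcases hs₁ j with h1 | h1 <;> rw [h1] at h2 <;> norm_num at h2
    set g : ℝ → ℝ := fun u => lassoObj X y w lam (β + u • (Pi.single j 1 : Fin p → ℝ)) with hg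
    have hmin0 : IsLocalMin g 0 := by
      apply Filter.Eventually.of_forall
      intro u
      have := hmin lam hlam (β + u • (Pi.single j 1 : Fin p → ℝ))
      simpa [hg, hβ] using this
    -- rewrite g explicitly
    have hgeq : g = fun u => (1 / 2) * ∑ i, w i * ((y i - X i ⬝ᵥ β) - u * X i j) ^ 2
        + lam * (|β j + u| + ∑ k ∈ Finset.univ.erase j, |β k|) := by
      funext u
      simp only [hg, lassoObj]
      congr 1
      · congr 1
        refine Finset.sum_congr rfl fun i _ => ?_
        have : X i ⬝ᵥ (β + u • (Pi.single j 1 : Fin p → ℝ)) = X i ⬝ᵥ β + u * X i j := by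
          rw [dotProduct_add, dotProduct_smul, smul_eq_mul]
          simp [dotProduct, Pi.single_apply, Finset.mul_sum, mul_ite]
        rw [this]; ring_nf
      · congr 1
        rw [← Finset.add_sum_erase _ _ (Finset.mem_univ j)]
        congr 1
        · simp [Pi.single_apply]
        · refine Finset.sum_congr rfl fun k hk => ?_
          simp [Pi.single_apply, Finset.ne_of_mem_erase hk]
    have hquad : HasDerivAt
        (fun u => (1 / 2) * ∑ i, w i * ((y i - X i ⬝ᵥ β) - u * X i j) ^ 2)
        ((1 / 2) * ∑ i, w i * (2 * ((y i - X i ⬝ᵥ β) - 0 * X i j) ^ 1 * (0 - X i j))) 0 := by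
      refine HasDerivAt.const_mul _ (HasDerivAt.fun_sum fun i _ => ?_)
      exact (((hasDerivAt_const 0 (y i - X i ⬝ᵥ β)).sub
        (hasDerivAt_mul_const (X i j))).pow 2).const_mul (w i)
    have habs : HasDerivAt
        (fun u => lam * (|β j + u| + ∑ k ∈ Finset.univ.erase j, |β k|))
        (lam * s j) 0 := by
      have := ((abs_deriv_aux hβj).add_const (∑ k ∈ Finset.univ.erase j, |β k|)).const_mul lam
      rwa [hs₂ lam hlam j] at this
    have hD : HasDerivAt g
        ((1 / 2) * ∑ i, w i * (2 * ((y i - X i ⬝ᵥ β) - 0 * X i j) ^ 1 * (0 - X i j))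
          + lam * s j) 0 := by
      rw [hgeq]; exact hquad.add habs
    have hzero := hmin0.hasDerivAt_eq_zero hD
    have hsum : (1 / 2) * ∑ i, w i * (2 * ((y i - X i ⬝ᵥ β) - 0 * X i j) ^ 1 * (0 - X i j))
        = -∑ i, w i * (y i - X i ⬝ᵥ β) * X i j := by
      rw [Finset.mul_sum, ← Finset.sum_neg_distrib]
      exact Finset.sum_congr rfl fun i _ => by ring
    rw [hsum] at hzero
    linarith
  -- closed form for βhat on the interval
  have heq : ∀ lam ∈ Set.Ioo a b,
      βhat lam = S⁻¹ *ᵥ (Xᵀ *ᵥ fun i => w i * y i) - lam • (S⁻¹ *ᵥ s) := by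
    intro lam hlam
    set β := βhat lam with hβ
    have hSv : S *ᵥ β = (Xᵀ *ᵥ fun i => w i * y i) - lam • s := by
      funext j
      have hk := kkt lam hlam j
      have hl : (S *ᵥ β) j = ∑ i, X i j * (w i * (X i ⬝ᵥ β)) := by
        rw [hSdef, ← Matrix.mulVec_mulVec, ← Matrix.mulVec_mulVec]
        simp [Matrix.mulVec, dotProduct, Matrix.transpose_apply,
          Matrix.diagonal_apply, ite_mul, zero_mul, Finset.sum_ite_eq]
      have he : ∑ i, w i * (y i - X i ⬝ᵥ β) * X i j
          = ∑ i, X i j * (w i * y i) - ∑ i, X i j * (w i * (X i ⬝ᵥ β)) := by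
        rw [← Finset.sum_sub_distrib]
        exact Finset.sum_congr rfl fun i _ => by ring
      rw [he] at hk
      have hr : ((Xᵀ *ᵥ fun i => w i * y i) - lam • s) j
          = (∑ i, X i j * (w i * y i)) - lam * s j := by
        simp [Matrix.mulVec, dotProduct, Matrix.transpose_apply]
      rw [hl, hr]
      linarith
    have hinv : S⁻¹ *ᵥ (S *ᵥ β) = β := by
      rw [Matrix.mulVec_mulVec, Matrix.nonsing_inv_mul S hdet, Matrix.one_mulVec]
    rw [← hinv, hSv, Matrix.mulVec_sub, Matrix.mulVec_smul]
  intro lam hlam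
  have hF : HasDerivAt (fun l : ℝ => S⁻¹ *ᵥ (Xᵀ *ᵥ fun i => w i * y i) - l • (S⁻¹ *ᵥ s))
      (-(S⁻¹ *ᵥ s)) lam := by
    have h1 := (hasDerivAt_id lam).smul_const (S⁻¹ *ᵥ s)
    have h2 := (hasDerivAt_const lam (S⁻¹ *ᵥ (Xᵀ *ᵥ fun i => w i * y i))).fun_sub h1
    simpa using h2
  have hev : βhat =ᶠ[nhds lam] fun l => S⁻¹ *ᵥ (Xᵀ *ᵥ fun i => w i * y i) - l • (S⁻¹ *ᵥ s) := by
    filter_upwards [isOpen_Ioo.mem_nhds hlam] with x hx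
    exact heq x hx
  exact hF.congr_of_eventuallyEq hev
end

section
/- (Piecewise linearity of the Lasso path.) Suppose S = XᵀWX is positive definite. Let I ⊆ (0,∞) be an interval and β̂ : I → ℝ^p a map such that for each λ ∈ I, β̂(λ) is a global minimizer of β ↦ L(β,λ), and suppose there is a fixed sign vector s ∈ {−1,1}^p with sign(β̂(λ)_j) = s_j for all λ ∈ I and all j. Then β̂ is affine in λ on I: for all λ₁, λ₂ ∈ I, β̂(λ₂) − β̂(λ₁) = −(λ₂ − λ₁)·S⁻¹ s. -/
/-!
At a minimizer none of whose coordinates vanishes the Lasso objective is differentiable, so its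
gradient `S β − XᵀWy + λ · sign β` vanishes there. Along the path the sign vector is the constant
`s`, so subtracting the stationarity equations at `λ₁` and `λ₂` gives
`S (β̂ λ₂ − β̂ λ₁) = −(λ₂ − λ₁) s`, and `S` is invertible.
-/

open Matrix BigOperators

theorem Real.sign_eq_signType_sign {x : ℝ} (hx : x ≠ 0) :
    Real.sign x = (SignType.sign x : ℝ) := by
  rcases hx.lt_or_gt with hx | hx <;> simp [hx, Real.sign_of_neg, Real.sign_of_pos]

theorem hasDerivAt_abs_add_mul {x : ℝ} (hx : x ≠ 0) (v : ℝ) :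
    HasDerivAt (fun ε : ℝ => |x + ε * v|) (Real.sign x * v) 0 := by
  have h := (hasDerivAt_abs (x := x + 0 * v) (by simpa using hx)).comp (0 : ℝ)
    ((hasDerivAt_mul_const v).const_add x)
  rwa [zero_mul, add_zero, ← Real.sign_eq_signType_sign hx] at h

theorem weightedGram_mulVec_sub_dotProduct {m n : Type*} [Fintype m] [Fintype n]
    [DecidableEq m] (X : Matrix m n ℝ) (w y : m → ℝ) (β v : n → ℝ) :
    ((Xᵀ * diagonal w * X) *ᵥ β - (Xᵀ * diagonal w) *ᵥ y) ⬝ᵥ v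
      = ∑ i, w i * (X i ⬝ᵥ β - y i) * (X i ⬝ᵥ v) := by
  rw [← mulVec_mulVec, ← mulVec_sub, ← mulVec_mulVec, mulVec_transpose, ← dotProduct_mulVec]
  simp only [dotProduct, mulVec_diagonal, Pi.sub_apply]
  rfl

-- The gradient (8) of the paper; since `Real.sign 0 = 0` it is one only where no `β k` vanishes.
noncomputable def lassoGrad {p t : ℕ} (X : Matrix (Fin t) (Fin p) ℝ)
    (y w : Fin t → ℝ) (lam : ℝ) (β : Fin p → ℝ) : Fin p → ℝ :=
  (Xᵀ * diagonal w * X) *ᵥ β - (Xᵀ * diagonal w) *ᵥ y + lam • fun k => Real.sign (β k)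

theorem hasDerivAt_lassoObj_line {p t : ℕ} (X : Matrix (Fin t) (Fin p) ℝ) (y w : Fin t → ℝ)
    (lam : ℝ) {β : Fin p → ℝ} (hβ : ∀ k, β k ≠ 0) (v : Fin p → ℝ) :
    HasDerivAt (fun ε : ℝ => lassoObj X y w lam (β + ε • v)) (lassoGrad X y w lam β ⬝ᵥ v) 0 := by
  have hres (i : Fin t) : HasDerivAt (fun ε : ℝ => y i - X i ⬝ᵥ (β + ε • v)) (-(X i ⬝ᵥ v)) 0 := by
    simp only [dotProduct_add, dotProduct_smul, smul_eq_mul, sub_add_eq_sub_sub]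
    exact (hasDerivAt_mul_const _).const_sub _
  have hsq := HasDerivAt.fun_sum (u := Finset.univ) fun i _ => ((hres i).fun_pow 2).const_mul (w i)
  have habs := HasDerivAt.fun_sum (u := Finset.univ) fun k _ => hasDerivAt_abs_add_mul (hβ k) (v k)
  refine ((hsq.const_mul (1 / 2)).add (habs.const_mul lam)).congr_deriv ?_
  rw [lassoGrad, add_dotProduct, weightedGram_mulVec_sub_dotProduct, smul_dotProduct]
  simp only [zero_smul, add_zero, smul_eq_mul]
  rw [Finset.mul_sum]
  congr 1
  refine Finset.sum_congr rfl fun i _ => ?_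
  push_cast
  ring

theorem lassoGrad_eq_zero_of_isMin {p t : ℕ} {X : Matrix (Fin t) (Fin p) ℝ} {y w : Fin t → ℝ}
    {lam : ℝ} {β : Fin p → ℝ} (hmin : ∀ β', lassoObj X y w lam β ≤ lassoObj X y w lam β')
    (hβ : ∀ k, β k ≠ 0) : lassoGrad X y w lam β = 0 := by
  set g := lassoGrad X y w lam β
  have hloc : IsLocalMin (fun ε : ℝ => lassoObj X y w lam (β + ε • g)) 0 :=
    Filter.Eventually.of_forall fun ε => by simpa using hmin (β + ε • g)
  exact dotProduct_self_eq_zero.mp <|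
    hloc.hasDerivAt_eq_zero (hasDerivAt_lassoObj_line X y w lam hβ g)

theorem lasso_path_affine_general
    {p t : ℕ} (X : Matrix (Fin t) (Fin p) ℝ) (y w : Fin t → ℝ)
    (hS : (Xᵀ * Matrix.diagonal w * X).PosDef)
    (I : Set ℝ)
    (βhat : ℝ → Fin p → ℝ)
    (hmin : ∀ lam ∈ I,
      ∀ β : Fin p → ℝ, lassoObj X y w lam (βhat lam) ≤ lassoObj X y w lam β)
    (s : Fin p → ℝ) (hs₁ : ∀ j, s j = -1 ∨ s j = 1)
    (hs₂ : ∀ lam ∈ I, ∀ j, Real.sign (βhat lam j) = s j) :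
    ∀ lam₁ ∈ I, ∀ lam₂ ∈ I,
      βhat lam₂ - βhat lam₁
        = -((lam₂ - lam₁) • (Xᵀ * Matrix.diagonal w * X)⁻¹.mulVec s) := by
  set S := Xᵀ * diagonal w * X
  have hne (lam : ℝ) (hlam : lam ∈ I) (j : Fin p) : βhat lam j ≠ 0 := fun h0 => by
    have := hs₂ lam hlam j
    rw [h0, Real.sign_zero] at this
    rcases hs₁ j with h | h <;> linarith
  have hstat (lam : ℝ) (hlam : lam ∈ I) : S *ᵥ βhat lam = (Xᵀ * diagonal w) *ᵥ y - lam • s := by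
    have h := lassoGrad_eq_zero_of_isMin (hmin lam hlam) (hne lam hlam)
    rw [lassoGrad, show (fun k => Real.sign (βhat lam k)) = s from funext (hs₂ lam hlam)] at h
    rw [eq_sub_iff_add_eq, ← sub_eq_zero, ← h]
    abel
  intro lam₁ h₁ lam₂ h₂
  have hdiff : S *ᵥ (βhat lam₂ - βhat lam₁) = (lam₁ - lam₂) • s := by
    rw [mulVec_sub, hstat lam₁ h₁, hstat lam₂ h₂, sub_smul]
    abel
  have hdet : IsUnit S.det := (isUnit_iff_isUnit_det S).mp hS.isUnit
  rw [← one_mulVec (βhat lam₂ - βhat lam₁), ← nonsing_inv_mul S hdet, ← mulVec_mulVec, hdiff,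
    mulVec_smul, ← neg_smul, neg_sub]

/-- Piecewise linearity of the Lasso path: on an interval `I ⊆ (0,∞)` where
the Lasso solution has a constant sign vector `s ∈ {−1,1}^p`, the solution
path is affine in `λ`: `β̂(λ₂) − β̂(λ₁) = −(λ₂ − λ₁)·S⁻¹ s`. -/
theorem lasso_path_affine
    {p t : ℕ} (X : Matrix (Fin t) (Fin p) ℝ) (y w : Fin t → ℝ)
    (hw : ∀ i, 0 < w i)
    (hS : (Xᵀ * Matrix.diagonal w * X).PosDef)
    (I : Set ℝ) (hI : I ⊆ Set.Ioi (0 : ℝ)) (hI' : I.OrdConnected)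
    (βhat : ℝ → Fin p → ℝ)
    (hmin : ∀ lam ∈ I,
      ∀ β : Fin p → ℝ, lassoObj X y w lam (βhat lam) ≤ lassoObj X y w lam β)
    (s : Fin p → ℝ) (hs₁ : ∀ j, s j = -1 ∨ s j = 1)
    (hs₂ : ∀ lam ∈ I, ∀ j, Real.sign (βhat lam j) = s j) :
    ∀ lam₁ ∈ I, ∀ lam₂ ∈ I,
      βhat lam₂ - βhat lam₁
        = -((lam₂ - lam₁) • (Xᵀ * Matrix.diagonal w * X)⁻¹.mulVec s) :=
  lasso_path_affine_general X y w hS I βhat hmin s hs₁ hs₂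
end

section
/- (Proposition 2, logistic case: derivative of the ℓ1-penalized logistic regression solution with respect to the regularization parameter.) Let I ⊆ (0,∞) be an open interval, s ∈ {−1,1}^p a fixed sign vector, and β̂ : I → ℝ^p a differentiable map such that for every λ ∈ I: sign(β̂(λ)_j) = s_j for all j, and the stationarity identity Σ_{i=1}^t w_i (y_i − σ(X_iᵀβ̂(λ)))·X_i = λ·s holds in ℝ^p. Suppose moreover that for each λ ∈ I the matrix M(λ) = Σ_{i=1}^t w_i · σ(X_iᵀβ̂(λ))·(1 − σ(X_iᵀβ̂(λ)))·X_i X_iᵀ ∈ ℝ^{p×p} is invertible. Then for every λ ∈ I the derivative satisfies dβ̂/dλ = −M(λ)⁻¹ s. -/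
open Matrix BigOperators

/-! Differentiating the stationarity identity `score(β̂(λ)) = λ s` in `λ` gives
`−M(λ) β̂'(λ) = s`, since the Jacobian of the score `β ↦ Σ_i w_i (y_i − σ(X_iᵀβ)) X_i` is `−M`
by `σ' = σ(1 − σ)`; invertibility of `M(λ)` then determines `β̂'(λ)`. -/

/-- The logistic function `σ(u) = 1/(1 + e^{−u})`. -/
noncomputable def logistic (u : ℝ) : ℝ := 1 / (1 + Real.exp (-u))

/-- The weighted Fisher-information-type matrix
`M(λ) = Σ_i w_i σ(X_iᵀβ̂(λ))(1 − σ(X_iᵀβ̂(λ))) X_i X_iᵀ`. -/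
noncomputable def logisticInfo {p t : ℕ} (X : Matrix (Fin t) (Fin p) ℝ)
    (w : Fin t → ℝ) (β : Fin p → ℝ) : Matrix (Fin p) (Fin p) ℝ :=
  Matrix.of fun j k =>
    ∑ i, w i * logistic (X i ⬝ᵥ β) * (1 - logistic (X i ⬝ᵥ β)) * X i j * X i k

theorem logistic_eq_sigmoid : logistic = Real.sigmoid := by
  funext u
  rw [logistic, Real.sigmoid_def, one_div]

theorem hasDerivAt_logistic (u : ℝ) :
    HasDerivAt logistic (logistic u * (1 - logistic u)) u := by
  rw [logistic_eq_sigmoid]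
  exact Real.hasDerivAt_sigmoid u

theorem HasDerivAt.const_dotProduct {ι : Type*} [Fintype ι] {f : ℝ → ι → ℝ}
    {f' : ι → ℝ} {x : ℝ} (hf : HasDerivAt f f' x) (v : ι → ℝ) :
    HasDerivAt (fun l => v ⬝ᵥ f l) (v ⬝ᵥ f') x := by
  simp only [dotProduct]
  exact HasDerivAt.fun_sum fun k _ => (hasDerivAt_pi.1 hf k).const_mul (v k)

section Score

variable {p t : ℕ} (X : Matrix (Fin t) (Fin p) ℝ) (y w : Fin t → ℝ)

/-- Minus the gradient of the unpenalized weighted logistic loss. -/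
noncomputable def logisticScore (β : Fin p → ℝ) : Fin p → ℝ :=
  fun j => ∑ i, w i * (y i - logistic (X i ⬝ᵥ β)) * X i j

theorem logisticInfo_mulVec (β v : Fin p → ℝ) (j : Fin p) :
    (logisticInfo X w β *ᵥ v) j =
      ∑ i, w i * logistic (X i ⬝ᵥ β) * (1 - logistic (X i ⬝ᵥ β)) * (X i ⬝ᵥ v) * X i j := by
  simp only [logisticInfo, mulVec, dotProduct, of_apply, Finset.sum_mul, Finset.mul_sum]
  rw [Finset.sum_comm]
  refine Finset.sum_congr rfl fun i _ => Finset.sum_congr rfl fun k _ => ?_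
  ring

theorem HasDerivAt.logisticScore {f : ℝ → Fin p → ℝ} {f' : Fin p → ℝ} {x : ℝ}
    (hf : HasDerivAt f f' x) :
    HasDerivAt (fun l => logisticScore X y w (f l)) (-(logisticInfo X w (f x) *ᵥ f')) x := by
  refine hasDerivAt_pi.2 fun j => ?_
  simp only [_root_.logisticScore, Pi.neg_apply, logisticInfo_mulVec, ← Finset.sum_neg_distrib]
  refine HasDerivAt.fun_sum fun i _ => ?_
  have hσ := (hasDerivAt_logistic (X i ⬝ᵥ f x)).comp x (hf.const_dotProduct (X i))
  exact (((hσ.const_sub (y i)).const_mul (w i)).mul_const (X i j)).congr_deriv (by ring)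

end Score

theorem logistic_lasso_path_derivative_general
    {p t : ℕ} (X : Matrix (Fin t) (Fin p) ℝ) (y w : Fin t → ℝ)
    (a b : ℝ)
    (s : Fin p → ℝ)
    (βhat : ℝ → Fin p → ℝ)
    (hdiff : ∀ lam ∈ Set.Ioo a b, DifferentiableAt ℝ βhat lam)
    (hstat : ∀ lam ∈ Set.Ioo a b, ∀ j,
      ∑ i, w i * (y i - logistic (X i ⬝ᵥ βhat lam)) * X i j = lam * s j)
    (hM : ∀ lam ∈ Set.Ioo a b, IsUnit (logisticInfo X w (βhat lam)).det) :
    ∀ lam ∈ Set.Ioo a b,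
      deriv βhat lam = -((logisticInfo X w (βhat lam))⁻¹.mulVec s) := by
  intro lam hlam
  have hscore : (fun l => logisticScore X y w (βhat l)) =ᶠ[nhds lam] fun l => l • s :=
    Filter.eventually_of_mem (isOpen_Ioo.mem_nhds hlam) fun l hl => funext (hstat l hl)
  have hMd : logisticInfo X w (βhat lam) *ᵥ deriv βhat lam = -s := by
    have h := ((hdiff lam hlam).hasDerivAt.logisticScore X y w).unique
      (((hasDerivAt_id lam).smul_const s).congr_of_eventuallyEq hscore)
    rw [one_smul] at h
    rw [← h, neg_neg]
  let _ := invertibleOfIsUnitDet _ (hM lam hlam)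
  rw [← mulVec_neg]
  exact (inv_mulVec_eq_vec hMd.symm).symm

/-- Proposition 2 (logistic case): if on an open interval `I = (a,b) ⊆ (0,∞)`
the differentiable solution path `β̂(λ)` has constant sign vector `s` and
satisfies the stationarity identity
`Σ_i w_i (y_i − σ(X_iᵀβ̂(λ)))·X_i = λ·s`, and `M(λ)` is invertible, then
`dβ̂/dλ = −M(λ)⁻¹ s`. -/
theorem logistic_lasso_path_derivative
    {p t : ℕ} (X : Matrix (Fin t) (Fin p) ℝ) (y w : Fin t → ℝ)
    (hy : ∀ i, y i = 0 ∨ y i = 1) (hw : ∀ i, 0 < w i)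
    (a b : ℝ) (ha : 0 ≤ a)
    (s : Fin p → ℝ) (hs : ∀ j, s j = -1 ∨ s j = 1)
    (βhat : ℝ → Fin p → ℝ)
    (hdiff : ∀ lam ∈ Set.Ioo a b, DifferentiableAt ℝ βhat lam)
    (hsgn : ∀ lam ∈ Set.Ioo a b, ∀ j, Real.sign (βhat lam j) = s j)
    (hstat : ∀ lam ∈ Set.Ioo a b, ∀ j,
      ∑ i, w i * (y i - logistic (X i ⬝ᵥ βhat lam)) * X i j = lam * s j)
    (hM : ∀ lam ∈ Set.Ioo a b, IsUnit (logisticInfo X w (βhat lam)).det) :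
    ∀ lam ∈ Set.Ioo a b,
      deriv βhat lam = -((logisticInfo X w (βhat lam))⁻¹.mulVec s) :=
  logistic_lasso_path_derivative_general X y w a b s βhat hdiff hstat hM
end

section
/- (Remark 1: the support of the regularization parameter partitions into finitely many constant-sign intervals.) Suppose S = XᵀWX is positive definite, and for each λ ≥ 0 let β̂(λ) ∈ ℝ^p denote the unique global minimizer of β ↦ L(β,λ). Then there exist finitely many knots 0 = λ_0 < λ_1 < ⋯ < λ_k < ∞ such that the sign vector λ ↦ (sign(β̂(λ)_1), …, sign(β̂(λ)_p)) ∈ {−1,0,1}^p is constant on each open interval (λ_{m−1}, λ_m) for m = 1,…,k and constant on (λ_k, ∞) (where it equals the zero vector). In particular the active set A(λ) = {j : β̂(λ)_j ≠ 0} is constant on each of these finitely many intervals. -/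
open Matrix BigOperators Finset

namespace LassoAux
variable {p t : ℕ} (X : Matrix (Fin t) (Fin p) ℝ) (y w : Fin t → ℝ)

noncomputable def r (β : Fin p → ℝ) (j : Fin p) : ℝ :=
  ∑ i, w i * (y i - X i ⬝ᵥ β) * X i j

theorem cross (β δ : Fin p → ℝ) :
    ∑ i, w i * (y i - X i ⬝ᵥ β) * (X i ⬝ᵥ δ) = ∑ j, δ j * r X y w β j := by
  simp only [r, dotProduct, Finset.mul_sum, Finset.sum_mul]
  rw [Finset.sum_comm]
  exact Finset.sum_congr rfl fun j _ => Finset.sum_congr rfl fun i _ => by ring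

theorem obj_expand (lam : ℝ) (β γ : Fin p → ℝ) :
    lassoObj X y w lam γ = lassoObj X y w lam β
      - ∑ j, (γ j - β j) * r X y w β j
      + (1/2) * ∑ i, w i * (X i ⬝ᵥ (γ - β))^2
      + lam * (∑ j, |γ j|) - lam * (∑ j, |β j|) := by
  have hdot : ∀ i, X i ⬝ᵥ γ = X i ⬝ᵥ β + X i ⬝ᵥ (γ - β) := by
    intro i; rw [← dotProduct_add]; congr 1; funext j; simp
  have key : ∑ i, w i * (y i - X i ⬝ᵥ γ)^2
      = ∑ i, w i * (y i - X i ⬝ᵥ β)^2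
        - 2 * ∑ i, w i * (y i - X i ⬝ᵥ β) * (X i ⬝ᵥ (γ - β))
        + ∑ i, w i * (X i ⬝ᵥ (γ - β))^2 := by
    have : ∀ i, w i * (y i - X i ⬝ᵥ γ)^2
        = w i * (y i - X i ⬝ᵥ β)^2
          - 2 * (w i * (y i - X i ⬝ᵥ β) * (X i ⬝ᵥ (γ - β)))
          + w i * (X i ⬝ᵥ (γ - β))^2 := by
      intro i; rw [hdot i]; ring
    rw [Finset.sum_congr rfl fun i _ => this i, Finset.sum_add_distrib,
      Finset.sum_sub_distrib, ← Finset.mul_sum]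
  rw [lassoObj, lassoObj, key, cross]
  simp only [Pi.sub_apply]
  ring

/-- KKT conditions at `(β, lam)`. -/
def KKT (lam : ℝ) (β : Fin p → ℝ) : Prop :=
  ∀ j, (0 < β j → r X y w β j = lam) ∧ (β j < 0 → r X y w β j = -lam) ∧
    (β j = 0 → |r X y w β j| ≤ lam)

theorem min_of_kkt (hw : ∀ i, 0 < w i) {lam : ℝ} (hlam : 0 ≤ lam) {β : Fin p → ℝ}
    (hk : KKT X y w lam β) :
    ∀ γ, lassoObj X y w lam β ≤ lassoObj X y w lam γ := by
  intro γ
  rw [obj_expand X y w lam β γ]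
  have h1 : 0 ≤ (1/2) * ∑ i, w i * (X i ⬝ᵥ (γ - β))^2 := by
    apply mul_nonneg (by norm_num)
    exact Finset.sum_nonneg fun i _ => mul_nonneg (hw i).le (sq_nonneg _)
  have term : ∀ j ∈ Finset.univ,
      (γ j - β j) * r X y w β j - lam * |γ j| + lam * |β j| ≤ 0 := by
    intro j _
    obtain ⟨hp, hn, hz⟩ := hk j
    rcases lt_trichotomy (β j) 0 with h | h | h
    · rw [hn h, abs_of_neg h]
      nlinarith [neg_abs_le (γ j)]
    · rw [h]
      have h2 : γ j * r X y w β j ≤ |γ j| * |r X y w β j| := by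
        calc γ j * r X y w β j ≤ |γ j * r X y w β j| := le_abs_self _
        _ = |γ j| * |r X y w β j| := abs_mul _ _
      have h3 := hz h
      have h4 := abs_nonneg (γ j)
      simp only [abs_zero]
      nlinarith
    · rw [hp h, abs_of_pos h]
      nlinarith [le_abs_self (γ j)]
  have hsum := Finset.sum_nonpos term
  rw [Finset.sum_add_distrib, Finset.sum_sub_distrib, ← Finset.mul_sum, ← Finset.mul_sum]
    at hsum
  linarith

theorem quad_id' (δ : Fin p → ℝ) :
    δ ⬝ᵥ ((Xᵀ * Matrix.diagonal w * X) *ᵥ δ) = ∑ i, w i * (X i ⬝ᵥ δ)^2 := by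
  simp [Matrix.mulVec, dotProduct, Matrix.mul_apply, Matrix.diagonal,
    Finset.mul_sum, Finset.sum_mul]
  have swap3 : ∀ (f : Fin p → Fin p → Fin t → ℝ),
      ∑ y, ∑ x, ∑ i, f y x i = ∑ i, ∑ y, ∑ x, f y x i := by
    intro f
    calc ∑ y, ∑ x, ∑ i, f y x i = ∑ y, ∑ i, ∑ x, f y x i :=
          Finset.sum_congr rfl fun y _ => Finset.sum_comm
      _ = ∑ i, ∑ y, ∑ x, f y x i := Finset.sum_comm
  rw [swap3]
  apply Finset.sum_congr rfl; intro i _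
  simp [pow_two, Finset.mul_sum, Finset.sum_mul]
  rw [Finset.sum_comm]
  apply Finset.sum_congr rfl; intro a _
  apply Finset.sum_congr rfl; intro b _
  ring

theorem quad_pos (hS : (Xᵀ * Matrix.diagonal w * X).PosDef) {δ : Fin p → ℝ} (hδ : δ ≠ 0) :
    0 < ∑ i, w i * (X i ⬝ᵥ δ)^2 := by
  have := hS.dotProduct_mulVec_pos hδ
  rw [← quad_id' X w δ]
  simpa using this

theorem unique_min (hS : (Xᵀ * Matrix.diagonal w * X).PosDef) {lam : ℝ} (hlam : 0 ≤ lam)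
    {β₁ β₂ : Fin p → ℝ}
    (h₁ : ∀ γ, lassoObj X y w lam β₁ ≤ lassoObj X y w lam γ)
    (h₂ : ∀ γ, lassoObj X y w lam β₂ ≤ lassoObj X y w lam γ) : β₁ = β₂ := by
  by_contra hne
  have hδ : β₁ - β₂ ≠ 0 := sub_ne_zero.mpr hne
  have hq := quad_pos X w hS hδ
  set m : Fin p → ℝ := (1/2 : ℝ) • (β₁ + β₂) with hm
  have hdm : ∀ i, X i ⬝ᵥ m = (1/2) * (X i ⬝ᵥ β₁) + (1/2) * (X i ⬝ᵥ β₂) := by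
    intro i
    rw [hm, dotProduct_smul, dotProduct_add]
    simp [mul_add]
  have hds : ∀ i, X i ⬝ᵥ (β₁ - β₂) = X i ⬝ᵥ β₁ - X i ⬝ᵥ β₂ := by
    intro i; rw [dotProduct_sub]
  have quadmid : ∑ i, w i * (y i - X i ⬝ᵥ m)^2
      = (1/2) * ∑ i, w i * (y i - X i ⬝ᵥ β₁)^2 + (1/2) * ∑ i, w i * (y i - X i ⬝ᵥ β₂)^2
        - (1/4) * ∑ i, w i * (X i ⬝ᵥ (β₁ - β₂))^2 := by
    rw [Finset.mul_sum, Finset.mul_sum, Finset.mul_sum, ← Finset.sum_add_distrib,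
      ← Finset.sum_sub_distrib]
    apply Finset.sum_congr rfl; intro i _
    rw [hdm i, hds i]; ring
  have habs : ∑ j, |m j| ≤ (1/2) * ∑ j, |β₁ j| + (1/2) * ∑ j, |β₂ j| := by
    rw [Finset.mul_sum, Finset.mul_sum, ← Finset.sum_add_distrib]
    apply Finset.sum_le_sum; intro j _
    have : m j = (1/2) * β₁ j + (1/2) * β₂ j := by simp [hm]
    rw [this]
    calc |(1/2) * β₁ j + (1/2) * β₂ j| ≤ |(1/2) * β₁ j| + |(1/2) * β₂ j| := abs_add_le _ _
    _ = 1/2 * |β₁ j| + 1/2 * |β₂ j| := by rw [abs_mul, abs_mul, abs_of_pos (by norm_num : (0:ℝ) < 1/2)]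
  have h12 : lassoObj X y w lam β₁ = lassoObj X y w lam β₂ :=
    le_antisymm (h₁ β₂) (h₂ β₁)
  have hmle := h₁ m
  have hlm : lam * ∑ j, |m j| ≤ lam * ((1/2) * ∑ j, |β₁ j| + (1/2) * ∑ j, |β₂ j|) :=
    mul_le_mul_of_nonneg_left habs hlam
  simp only [lassoObj] at hmle h12
  rw [quadmid] at hmle
  nlinarith



theorem coord_ineq {lam : ℝ} {β : Fin p → ℝ}
    (hmin : ∀ γ, lassoObj X y w lam β ≤ lassoObj X y w lam γ) (j : Fin p) (h : ℝ) :
    0 ≤ (1/2) * (∑ i, w i * (X i j)^2) * h^2 - h * r X y w β j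
      + lam * (|β j + h| - |β j|) := by
  set γ := Function.update β j (β j + h) with hγ
  have hdiff : γ - β = Pi.single j h := by
    funext k
    by_cases hk : k = j
    · subst hk; simp [hγ]
    · simp [hγ, Function.update_of_ne hk, Pi.single_eq_of_ne hk]
  have hd : ∀ i, X i ⬝ᵥ (γ - β) = X i j * h := by
    intro i; rw [hdiff, dotProduct_single]
  have hsum1 : ∑ k, (γ k - β k) * r X y w β k = h * r X y w β j := by
    rw [Finset.sum_eq_single j]
    · have : γ j - β j = h := by rw [hγ]; simp
      rw [this]
    · intro k _ hk
      have : γ k - β k = 0 := by rw [hγ]; simp [Function.update_of_ne hk]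
      rw [this, zero_mul]
    · simp
  have hsum2 : ∑ i, w i * (X i ⬝ᵥ (γ - β))^2 = (∑ i, w i * (X i j)^2) * h^2 := by
    rw [Finset.sum_mul]
    apply Finset.sum_congr rfl; intro i _
    rw [hd i]; ring
  have hsum3 : ∑ k, |γ k| = ∑ k, |β k| - |β j| + |β j + h| := by
    have e1 : ∑ k, |γ k| = |γ j| + ∑ k ∈ Finset.univ.erase j, |γ k| :=
      (Finset.add_sum_erase _ _ (Finset.mem_univ j)).symm
    have e2 : ∑ k, |β k| = |β j| + ∑ k ∈ Finset.univ.erase j, |β k| :=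
      (Finset.add_sum_erase _ _ (Finset.mem_univ j)).symm
    have e3 : ∑ k ∈ Finset.univ.erase j, |γ k| = ∑ k ∈ Finset.univ.erase j, |β k| := by
      apply Finset.sum_congr rfl; intro k hk
      rw [hγ, Function.update_of_ne (Finset.ne_of_mem_erase hk)]
    have e4 : γ j = β j + h := by rw [hγ]; simp
    rw [e1, e2, e3, e4]; ring
  have := hmin γ
  rw [obj_expand X y w lam β γ, hsum1, hsum2, hsum3] at this
  nlinarith [this]

theorem real_aux1 {S c b lam : ℝ} (hS : 0 < S) (hb : 0 < b)
    (key : ∀ h : ℝ, 0 ≤ (1/2) * S * h^2 - h * c + lam * (|b + h| - |b|)) : c = lam := by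
  by_contra hd
  set d := c - lam with hdd
  have hd0 : d ≠ 0 := sub_ne_zero.mpr hd
  set m := min (b/2) (|d|/S) with hmm
  have hm0 : 0 < m := lt_min (by linarith) (div_pos (abs_pos.mpr hd0) hS)
  have hmb : m < b := lt_of_le_of_lt (min_le_left _ _) (by linarith)
  have hmS : S * m ≤ |d| := by
    have := min_le_right (b/2) (|d|/S)
    calc S * m ≤ S * (|d|/S) := mul_le_mul_of_nonneg_left this hS.le
    _ = |d| := by field_simp
  set h : ℝ := if 0 < d then m else -m with hh
  have habs2 : h^2 = m^2 := by
    rw [hh]; split_ifs <;> ring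
  have hhd : h * d = m * |d| := by
    rcases lt_trichotomy d 0 with hc | hc | hc
    · have hnc : ¬ (0 < d) := by linarith
      rw [hh, if_neg hnc, abs_of_neg hc]; ring
    · exact absurd hc hd0
    · rw [hh, if_pos hc, abs_of_pos hc]
  have hhm : |h| ≤ m := by
    rw [hh]; split_ifs <;> simp [abs_of_pos hm0, abs_of_nonneg hm0.le]
  have hbh : 0 < b + h := by
    have h1 := neg_abs_le h
    linarith
  have hrw : |b + h| - |b| = h := by
    rw [abs_of_pos hbh, abs_of_pos hb]; ring
  have hk := key h
  rw [hrw] at hk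
  have hmd : 0 < m * |d| := mul_pos hm0 (abs_pos.mpr hd0)
  have hx : h * c - lam * h = h * d := by rw [hdd]; ring
  have h5 : S * h^2 = S * m^2 := by rw [habs2]
  have h6 : 0 ≤ (1/2) * S * m^2 - m * |d| := by nlinarith [hk, hx, hhd, h5]
  have h7 : S * m * m ≤ |d| * m := mul_le_mul_of_nonneg_right hmS hm0.le
  nlinarith [h6, h7, hmd]

theorem real_aux2 {S c lam : ℝ} (hS : 0 < S) (hlam : 0 ≤ lam)
    (key : ∀ h : ℝ, 0 ≤ (1/2) * S * h^2 - h * c + lam * |h|) : |c| ≤ lam := by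
  by_contra hlt
  push_neg at hlt
  have hc0 : c ≠ 0 := by intro h0; rw [h0, abs_zero] at hlt; linarith
  set e := |c| - lam with he
  have he0 : 0 < e := by linarith
  set h : ℝ := (if 0 < c then 1 else -1) * (e/S) with hh
  have heS : 0 < e / S := div_pos he0 hS
  have habs : |h| = e/S := by
    rw [hh]; split_ifs <;> rw [abs_mul] <;> simp [abs_of_pos heS]
  have hh2 : h^2 = (e/S)^2 := by
    rw [hh]; split_ifs <;> ring
  have hhc : h * c = (e/S) * |c| := by
    rcases lt_trichotomy c 0 with hc | hc | hc
    · have : ¬ (0 < c) := by linarith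
      rw [hh, if_neg this, abs_of_neg hc]; ring
    · exact absurd hc hc0
    · rw [hh, if_pos hc, abs_of_pos hc]; ring
  have := key h
  rw [habs, hh2, hhc] at this
  have h1 : (1/2) * S * (e/S)^2 = (e/S) * (e/2) := by field_simp
  rw [h1] at this
  have h2 : (e/S) * (e/2) - (e/S) * |c| + lam * (e/S) = (e/S) * (e/2 - |c| + lam) := by ring
  rw [h2] at this
  have h3 : e/2 - |c| + lam = -(e/2) := by rw [he]; ring
  rw [h3] at this
  nlinarith [heS, he0]

theorem kkt_of_min (hS : (Xᵀ * Matrix.diagonal w * X).PosDef) {lam : ℝ} (hlam : 0 ≤ lam)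
    {β : Fin p → ℝ} (hmin : ∀ γ, lassoObj X y w lam β ≤ lassoObj X y w lam γ) :
    KKT X y w lam β := by
  intro j
  have hSjj : 0 < ∑ i, w i * (X i j)^2 := by
    have hne : (Pi.single j 1 : Fin p → ℝ) ≠ 0 := by
      intro h0
      have := congrFun h0 j
      simp at this
    have := quad_pos X w hS hne
    have heq : ∀ i, X i ⬝ᵥ Pi.single j (1:ℝ) = X i j := by
      intro i; rw [dotProduct_single]; ring
    calc (0:ℝ) < ∑ i, w i * (X i ⬝ᵥ Pi.single j (1:ℝ))^2 := this
    _ = ∑ i, w i * (X i j)^2 := Finset.sum_congr rfl fun i _ => by rw [heq i]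
  have key := coord_ineq X y w hmin j
  refine ⟨?_, ?_, ?_⟩
  · intro hpos
    exact real_aux1 hSjj hpos (fun h => key h)
  · intro hneg
    have hb : 0 < -β j := by linarith
    have key' : ∀ h : ℝ, 0 ≤ (1/2) * (∑ i, w i * (X i j)^2) * h^2
        - h * (-(r X y w β j)) + lam * (|-β j + h| - |-β j|) := by
      intro h
      have := key (-h)
      have e1 : |-β j + h| = |β j + -h| := by rw [← abs_neg]; congr 1; ring
      have e2 : |-β j| = |β j| := abs_neg _
      rw [e1, e2]
      nlinarith [this]
    have := real_aux1 hSjj hb key'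
    linarith
  · intro hzero
    apply real_aux2 hSjj hlam
    intro h
    have := key h
    rw [hzero] at this
    simpa using this

theorem sign_eq_one_iff' (x : ℝ) : Real.sign x = 1 ↔ 0 < x := by
  constructor
  · intro h
    rcases lt_trichotomy x 0 with hc | hc | hc
    · rw [Real.sign_of_neg hc] at h; norm_num at h
    · rw [hc, Real.sign_zero] at h; norm_num at h
    · exact hc
  · exact Real.sign_of_pos

theorem sign_eq_neg_one_iff' (x : ℝ) : Real.sign x = -1 ↔ x < 0 := by
  constructor
  · intro h
    rcases lt_trichotomy x 0 with hc | hc | hc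
    · exact hc
    · rw [hc, Real.sign_zero] at h; norm_num at h
    · rw [Real.sign_of_pos hc] at h; norm_num at h
  · exact Real.sign_of_neg

theorem comb_pos {θ a b : ℝ} (h0 : 0 ≤ θ) (h1 : θ ≤ 1) (ha : 0 < a) (hb : 0 < b) :
    0 < (1-θ)*a + θ*b := by
  rcases eq_or_lt_of_le h0 with h | h
  · rw [← h]; simpa using ha
  · have : 0 < θ * b := mul_pos h hb
    nlinarith

theorem r_interp {θ : ℝ} (β₁ β₂ : Fin p → ℝ) (j : Fin p) :
    r X y w (fun k => (1-θ) * β₁ k + θ * β₂ k) j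
      = (1-θ) * r X y w β₁ j + θ * r X y w β₂ j := by
  simp only [r, Finset.mul_sum, ← Finset.sum_add_distrib]
  apply Finset.sum_congr rfl; intro i _
  have hdot : X i ⬝ᵥ (fun k => (1-θ) * β₁ k + θ * β₂ k)
      = (1-θ) * (X i ⬝ᵥ β₁) + θ * (X i ⬝ᵥ β₂) := by
    simp only [dotProduct, Finset.mul_sum, ← Finset.sum_add_distrib]
    apply Finset.sum_congr rfl; intro k _; ring
  rw [hdot]; ring

theorem sign_interp (hw : ∀ i, 0 < w i) (hS : (Xᵀ * Matrix.diagonal w * X).PosDef)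
    (βhat : ℝ → Fin p → ℝ)
    (hmin : ∀ lam : ℝ, 0 ≤ lam →
      ∀ β : Fin p → ℝ, lassoObj X y w lam (βhat lam) ≤ lassoObj X y w lam β)
    {l₁ l l₂ : ℝ} (h0 : 0 ≤ l₁) (h1 : l₁ ≤ l) (h2 : l ≤ l₂)
    (hsgn : ∀ j, Real.sign (βhat l₁ j) = Real.sign (βhat l₂ j)) :
    ∀ j, Real.sign (βhat l j) = Real.sign (βhat l₁ j) := by
  rcases eq_or_lt_of_le (le_trans h1 h2) with heq | hlt
  · have : l = l₁ := le_antisymm (heq ▸ h2) h1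
    rw [this]; intro j; rfl
  set θ := (l - l₁) / (l₂ - l₁) with hθ
  have hd : 0 < l₂ - l₁ := by linarith
  have hθ0 : 0 ≤ θ := div_nonneg (by linarith) hd.le
  have hθ1 : θ ≤ 1 := by
    rw [hθ, div_le_one hd]; linarith
  have hlc : (1-θ)*l₁ + θ*l₂ = l := by
    rw [hθ]; field_simp; ring
  have hl0 : 0 ≤ l := le_trans h0 h1
  have hl2 : 0 ≤ l₂ := le_trans hl0 h2
  have K₁ := kkt_of_min X y w hS h0 (hmin l₁ h0)
  have K₂ := kkt_of_min X y w hS hl2 (hmin l₂ hl2)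
  set β : Fin p → ℝ := fun k => (1-θ) * βhat l₁ k + θ * βhat l₂ k with hβ
  have hkkt : KKT X y w l β := by
    intro j
    obtain ⟨P₁, N₁, Z₁⟩ := K₁ j
    obtain ⟨P₂, N₂, Z₂⟩ := K₂ j
    have hr := r_interp X y w (θ := θ) (βhat l₁) (βhat l₂) j
    rcases lt_trichotomy (βhat l₁ j) 0 with hc | hc | hc
    · have hc2 : βhat l₂ j < 0 := by
        rw [← sign_eq_neg_one_iff', ← hsgn j, sign_eq_neg_one_iff']; exact hc
      have hβneg : β j < 0 := by
        have := comb_pos hθ0 hθ1 (neg_pos.mpr hc) (neg_pos.mpr hc2)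
        simp only [hβ]; nlinarith
      refine ⟨fun h => absurd h (by linarith), fun _ => ?_, fun h => absurd h (by linarith)⟩
      rw [← hβ] at hr
      rw [hr, N₁ hc, N₂ hc2, ← hlc]; ring
    · have hc2 : βhat l₂ j = 0 := by
        have := hsgn j
        rw [hc, Real.sign_zero] at this
        by_contra hne
        rcases lt_or_gt_of_ne hne with h | h
        · rw [Real.sign_of_neg h] at this; norm_num at this
        · rw [Real.sign_of_pos h] at this; norm_num at this
      have hβ0 : β j = 0 := by simp [hβ, hc, hc2]
      refine ⟨fun h => absurd h (by linarith), fun h => absurd h (by linarith), fun _ => ?_⟩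
      rw [← hβ] at hr
      rw [hr]
      have e1 := Z₁ hc
      have e2 := Z₂ hc2
      calc |(1-θ) * r X y w (βhat l₁) j + θ * r X y w (βhat l₂) j|
          ≤ |(1-θ) * r X y w (βhat l₁) j| + |θ * r X y w (βhat l₂) j| := abs_add_le _ _
        _ = (1-θ) * |r X y w (βhat l₁) j| + θ * |r X y w (βhat l₂) j| := by
            rw [abs_mul, abs_mul, abs_of_nonneg (by linarith : (0:ℝ) ≤ 1-θ),
              abs_of_nonneg hθ0]
        _ ≤ (1-θ) * l₁ + θ * l₂ := by
            have := mul_le_mul_of_nonneg_left e1 (by linarith : (0:ℝ) ≤ 1-θ)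
            have := mul_le_mul_of_nonneg_left e2 hθ0
            linarith
        _ = l := hlc
    · have hc2 : 0 < βhat l₂ j := by
        rw [← sign_eq_one_iff', ← hsgn j, sign_eq_one_iff']; exact hc
      have hβpos : 0 < β j := by
        rw [hβ]; exact comb_pos hθ0 hθ1 hc hc2
      refine ⟨fun _ => ?_, fun h => absurd h (by linarith), fun h => absurd h (by linarith)⟩
      rw [← hβ] at hr
      rw [hr, P₁ hc, P₂ hc2, hlc]
  have hβmin := min_of_kkt X y w hw hl0 hkkt
  have heqβ : βhat l = β := unique_min X y w hS hl0 (hmin l hl0) hβmin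
  intro j
  rw [heqβ]
  rcases lt_trichotomy (βhat l₁ j) 0 with hc | hc | hc
  · have hc2 : βhat l₂ j < 0 := by
      rw [← sign_eq_neg_one_iff', ← hsgn j, sign_eq_neg_one_iff']; exact hc
    have : β j < 0 := by
      have := comb_pos hθ0 hθ1 (neg_pos.mpr hc) (neg_pos.mpr hc2)
      simp only [hβ]; nlinarith
    rw [Real.sign_of_neg this, Real.sign_of_neg hc]
  · have hc2 : βhat l₂ j = 0 := by
      have := hsgn j
      rw [hc, Real.sign_zero] at this
      by_contra hne
      rcases lt_or_gt_of_ne hne with h | h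
      · rw [Real.sign_of_neg h] at this; norm_num at this
      · rw [Real.sign_of_pos h] at this; norm_num at this
    have : β j = 0 := by simp [hβ, hc, hc2]
    rw [this, hc]
  · have hc2 : 0 < βhat l₂ j := by
      rw [← sign_eq_one_iff', ← hsgn j, sign_eq_one_iff']; exact hc
    have : 0 < β j := by rw [hβ]; exact comb_pos hθ0 hθ1 hc hc2
    rw [Real.sign_of_pos this, Real.sign_of_pos hc]

theorem big_lam_zero (hw : ∀ i, 0 < w i) (hS : (Xᵀ * Matrix.diagonal w * X).PosDef)
    (βhat : ℝ → Fin p → ℝ)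
    (hmin : ∀ lam : ℝ, 0 ≤ lam →
      ∀ β : Fin p → ℝ, lassoObj X y w lam (βhat lam) ≤ lassoObj X y w lam β)
    {lam : ℝ} (hbig : ∑ j, |∑ i, w i * y i * X i j| ≤ lam) :
    βhat lam = 0 := by
  have hlam : 0 ≤ lam :=
    le_trans (Finset.sum_nonneg fun j _ => abs_nonneg _) hbig
  have hkkt : KKT X y w lam (0 : Fin p → ℝ) := by
    intro j
    refine ⟨fun h => absurd h (by simp), fun h => absurd h (by simp), fun _ => ?_⟩
    have hr0 : r X y w (0 : Fin p → ℝ) j = ∑ i, w i * y i * X i j := by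
      apply Finset.sum_congr rfl; intro i _
      rw [dotProduct_zero]; ring
    rw [hr0]
    calc |∑ i, w i * y i * X i j| ≤ ∑ j', |∑ i, w i * y i * X i j'| :=
          Finset.single_le_sum (f := fun j' => |∑ i, w i * y i * X i j'|)
            (fun j' _ => abs_nonneg _) (Finset.mem_univ j)
      _ ≤ lam := hbig
  have h0min := min_of_kkt X y w hw hlam hkkt
  exact unique_min X y w hS hlam (hmin lam hlam) h0min

end LassoAux

open LassoAux in

/-- Remark 1: the support of the regularization parameter partitions into
finitely many constant-sign intervals. There are finitely many knots
`0 = λ_0 < λ_1 < ⋯ < λ_k` such that the sign vector of the Lasso solution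
`β̂(λ)` is constant on each open interval `(λ_{m−1}, λ_m)`, and `β̂(λ) = 0`
for all `λ > λ_k`. -/
theorem lasso_path_finitely_many_sign_regions
    {p t : ℕ} (X : Matrix (Fin t) (Fin p) ℝ) (y w : Fin t → ℝ)
    (hw : ∀ i, 0 < w i)
    (hS : (Xᵀ * Matrix.diagonal w * X).PosDef)
    (βhat : ℝ → Fin p → ℝ)
    (hmin : ∀ lam : ℝ, 0 ≤ lam →
      ∀ β : Fin p → ℝ, lassoObj X y w lam (βhat lam) ≤ lassoObj X y w lam β) :
    ∃ (k : ℕ) (knots : Fin (k + 1) → ℝ),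
      knots 0 = 0 ∧ StrictMono knots ∧
      (∀ m : Fin k,
        ∀ lam₁ ∈ Set.Ioo (knots m.castSucc) (knots m.succ),
        ∀ lam₂ ∈ Set.Ioo (knots m.castSucc) (knots m.succ),
          ∀ j, Real.sign (βhat lam₁ j) = Real.sign (βhat lam₂ j)) ∧
      (∀ lam, knots (Fin.last k) < lam → βhat lam = 0) := by
  classical
  set M : ℝ := ∑ j, |∑ i, w i * y i * X i j| with hM
  have hM0 : 0 ≤ M := Finset.sum_nonneg fun j _ => abs_nonneg _
  set dec : Fin 3 → ℝ := ![(-1 : ℝ), 0, 1] with hdec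
  set enc : ℝ → Fin 3 := fun x => if x < 0 then 0 else if 0 < x then 2 else 1 with henc'
  have henc : ∀ x : ℝ, Real.sign x = dec (enc x) := by
    intro x
    rcases lt_trichotomy x 0 with hc | hc | hc
    · rw [Real.sign_of_neg hc, henc', hdec]; simp [hc]
    · rw [hc, Real.sign_zero, henc', hdec]; simp
    · rw [Real.sign_of_pos hc, henc', hdec]
      have h1 : ¬ x < 0 := by linarith
      simp [h1, hc]
  set A : (Fin p → Fin 3) → Set ℝ := fun s =>
    {l | l ∈ Set.Icc 0 M ∧ ∀ j, Real.sign (βhat l j) = dec (s j)} with hA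
  have hbdd : ∀ s, BddBelow (A s) ∧ BddAbove (A s) := by
    intro s
    exact ⟨⟨0, fun x hx => hx.1.1⟩, ⟨M, fun x hx => hx.1.2⟩⟩
  have hbounds : ∀ s, (0 ≤ sInf (A s) ∧ sInf (A s) ≤ M) ∧
      (0 ≤ sSup (A s) ∧ sSup (A s) ≤ M) := by
    intro s
    by_cases hne : (A s).Nonempty
    · obtain ⟨a, ha⟩ := hne
      refine ⟨⟨le_csInf ⟨a, ha⟩ fun x hx => hx.1.1,
        le_trans (csInf_le (hbdd s).1 ha) ha.1.2⟩,
        ⟨le_trans ha.1.1 (le_csSup (hbdd s).2 ha),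
        csSup_le ⟨a, ha⟩ fun x hx => hx.1.2⟩⟩
    · rw [Set.not_nonempty_iff_eq_empty] at hne
      rw [hne, Real.sInf_empty, Real.sSup_empty]
      exact ⟨⟨le_refl 0, hM0⟩, ⟨le_refl 0, hM0⟩⟩
  have hcover : ∀ l ∈ Set.Icc (0:ℝ) M, l ∈ A (fun j => enc (βhat l j)) :=
    fun l hl => ⟨hl, fun j => henc _⟩
  set T : Finset ℝ := insert 0 (insert M
    (((Finset.univ : Finset (Fin p → Fin 3)).image fun s => sInf (A s)) ∪
     ((Finset.univ : Finset (Fin p → Fin 3)).image fun s => sSup (A s)))) with hT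
  have hT0 : (0:ℝ) ∈ T := Finset.mem_insert_self _ _
  have hTM : M ∈ T := Finset.mem_insert_of_mem (Finset.mem_insert_self _ _)
  have hTinf : ∀ s, sInf (A s) ∈ T := fun s =>
    Finset.mem_insert_of_mem (Finset.mem_insert_of_mem
      (Finset.mem_union_left _ (Finset.mem_image_of_mem _ (Finset.mem_univ s))))
  have hTsup : ∀ s, sSup (A s) ∈ T := fun s =>
    Finset.mem_insert_of_mem (Finset.mem_insert_of_mem
      (Finset.mem_union_right _ (Finset.mem_image_of_mem _ (Finset.mem_univ s))))
  have hTnonneg : ∀ x ∈ T, 0 ≤ x := by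
    intro x hx
    rw [hT] at hx
    rcases Finset.mem_insert.mp hx with h | hx
    · rw [h]
    rcases Finset.mem_insert.mp hx with h | hx
    · rw [h]; exact hM0
    rcases Finset.mem_union.mp hx with hx | hx <;>
      · obtain ⟨s, _, hs⟩ := Finset.mem_image.mp hx
        rw [← hs]
        first
          | exact (hbounds s).1.1
          | exact (hbounds s).2.1
  have hTle : ∀ x ∈ T, x ≤ M := by
    intro x hx
    rw [hT] at hx
    rcases Finset.mem_insert.mp hx with h | hx
    · rw [h]; exact hM0
    rcases Finset.mem_insert.mp hx with h | hx
    · rw [h]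
    rcases Finset.mem_union.mp hx with hx | hx <;>
      · obtain ⟨s, _, hs⟩ := Finset.mem_image.mp hx
        rw [← hs]
        first
          | exact (hbounds s).1.2
          | exact (hbounds s).2.2
  have hcard : 0 < T.card := Finset.card_pos.mpr ⟨0, hT0⟩
  set k := T.card - 1 with hk
  have hck : T.card = k + 1 := (Nat.succ_pred_eq_of_pos hcard).symm
  set e := T.orderIsoOfFin hck with he
  set knots : Fin (k+1) → ℝ := fun i => (e i : ℝ) with hknots
  have hmem : ∀ i, knots i ∈ T := fun i => (e i).2
  have hsurj : ∀ x ∈ T, ∃ i, knots i = x := by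
    intro x hx
    exact ⟨e.symm ⟨x, hx⟩, congrArg Subtype.val (e.apply_symm_apply ⟨x, hx⟩)⟩
  have hmono : StrictMono knots := fun a b hab => Subtype.coe_lt_coe.mpr (e.strictMono hab)
  have hk0 : knots 0 = 0 := by
    obtain ⟨i, hi⟩ := hsurj 0 hT0
    refine le_antisymm ?_ (hTnonneg _ (hmem 0))
    calc knots 0 ≤ knots i := hmono.monotone (Fin.zero_le i)
    _ = 0 := hi
  refine ⟨k, knots, hk0, hmono, ?_, ?_⟩
  · -- constant sign on each open interval
    have hmain : ∀ m : Fin k, ∀ l₁ l₂ : ℝ,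
        l₁ ∈ Set.Ioo (knots m.castSucc) (knots m.succ) →
        l₂ ∈ Set.Ioo (knots m.castSucc) (knots m.succ) → l₁ ≤ l₂ →
        ∀ j, Real.sign (βhat l₁ j) = Real.sign (βhat l₂ j) := by
      intro m l₁ l₂ h₁ h₂ hle
      have hlow : (0:ℝ) ≤ knots m.castSucc := by
        rw [← hk0]; exact hmono.monotone (Fin.zero_le _)
      have hl₁0 : 0 < l₁ := lt_of_le_of_lt hlow h₁.1
      have hhigh : knots m.succ ≤ M := hTle _ (hmem m.succ)
      have hl₁M : l₁ ≤ M := le_trans h₁.2.le hhigh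
      set s : Fin p → Fin 3 := fun j => enc (βhat l₁ j) with hs
      have hl₁A : l₁ ∈ A s := hcover l₁ ⟨hl₁0.le, hl₁M⟩
      have hne : (A s).Nonempty := ⟨l₁, hl₁A⟩
      have hsupT := hTsup s
      obtain ⟨i, hi⟩ := hsurj _ hsupT
      have hstep1 : knots m.castSucc < knots i := by
        rw [hi]
        exact lt_of_lt_of_le h₁.1 (le_csSup (hbdd s).2 hl₁A)
      have hstep2 : m.castSucc < i := hmono.lt_iff_lt.mp hstep1
      have hstep3 : m.succ ≤ i := Fin.castSucc_lt_iff_succ_le.mp hstep2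
      have hsup_gt : l₂ < sSup (A s) := by
        rw [← hi]
        exact lt_of_lt_of_le h₂.2 (hmono.monotone hstep3)
      obtain ⟨v, hvA, hvgt⟩ := exists_lt_of_lt_csSup hne hsup_gt
      have hsgn : ∀ j, Real.sign (βhat l₁ j) = Real.sign (βhat v j) := by
        intro j; rw [hl₁A.2 j, hvA.2 j]
      have := sign_interp X y w hw hS βhat hmin hl₁0.le hle hvgt.le hsgn
      intro j
      exact (this j).symm
    intro m lam₁ h₁ lam₂ h₂ j
    rcases le_total lam₁ lam₂ with h | h
    · exact hmain m lam₁ lam₂ h₁ h₂ h j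
    · exact (hmain m lam₂ lam₁ h₂ h₁ h j).symm
  · -- zero beyond the last knot
    intro lam hlam
    have hMle : M ≤ knots (Fin.last k) := by
      obtain ⟨i, hi⟩ := hsurj M hTM
      rw [← hi]
      exact hmono.monotone (Fin.le_last i)
    exact big_lam_zero X y w hw hS βhat hmin (by rw [← hM]; linarith)
end
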